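/- Let (L, ≤) be a finite distributive lattice and let G = G(P) and G' = G(P') be girdles of distinct prime ideals P, P'. Then G and G' are incomparable under ≺ (neither G ≺ G' nor G' ≺ G) if and only if there exist X, Y, Z ∈ L such that Y/X is a p-factor in G and Z/X is a p-factor in G'. -/

import Mathlib

namespace GirdleStmt

variable {L : Type*} [DistribLattice L] [Fintype L]

/-- `P` is an ideal of the lattice: closed under joins of its members and under
meets with arbitrary elements. -/
def IsIdealSet (P : Set L) : Prop :=
  (∀ X ∈ P, ∀ Y ∈ P, X ⊔ Y ∈ P) ∧ (∀ X ∈ P, ∀ Z : L, X ⊓ Z ∈ P)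

/-- `P` is a filter of the lattice: closed under meets of its members and under
joins with arbitrary elements. -/
def IsFilterSet (P : Set L) : Prop :=
  (∀ X ∈ P, ∀ Y ∈ P, X ⊓ Y ∈ P) ∧ (∀ X ∈ P, ∀ Z : L, X ⊔ Z ∈ P)

/-- `P` is a prime ideal: a (nonempty, proper) ideal whose complement is a filter. -/
def IsPrimeIdealSet (P : Set L) : Prop :=
  IsIdealSet P ∧ IsFilterSet Pᶜ ∧ P.Nonempty ∧ Pᶜ.Nonempty

/-- The girdle of a prime ideal `P`: the set of p-factors `Y/X` (covering pairs,
encoded as pairs `(X, Y)` with `X ⋖ Y`) with `X ∈ P` and `Y ∉ P`. -/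
def girdle (P : Set L) : Set (L × L) :=
  {p | p.1 ⋖ p.2 ∧ p.1 ∈ P ∧ p.2 ∉ P}

/-- A maximal (dense) chain of the lattice, from the minimum to the maximum, with
consecutive elements in covering relation. -/
structure MaxChain (L : Type*) [Lattice L] where
  n : ℕ
  ch : Fin (n + 1) → L
  bot : ∀ X : L, ch 0 ≤ X
  top : ∀ X : L, X ≤ ch (Fin.last n)
  cov : ∀ i : Fin n, ch i.castSucc ⋖ ch i.succ

/-- The order `G(P) ≺ G(P')` on girdles: in every maximal chain, every p-factor of
`G(P)` occurring in the chain occurs strictly earlier than every p-factor of `G(P')`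
occurring in the chain. -/
def GirdlePrec (P P' : Set L) : Prop :=
  ∀ (C : MaxChain L) (i j : Fin C.n),
    (C.ch i.castSucc, C.ch i.succ) ∈ girdle P →
    (C.ch j.castSucc, C.ch j.succ) ∈ girdle P' →
    (i : ℕ) < (j : ℕ)

/-! ### Auxiliary lemmas -/

lemma down_closed {P : Set L} (hP : IsIdealSet P) {x y : L} (hxy : x ≤ y) (hy : y ∈ P) :
    x ∈ P := by
  have := hP.2 y hy x
  rwa [inf_eq_right.mpr hxy] at this

/-- If `Y ≠ Z` both cover `X` in a distributive lattice, then `Y ⊔ Z` covers `Z`. -/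
lemma covby_sup_of_covby {X Y Z : L} (hY : X ⋖ Y) (hZ : X ⋖ Z) (hne : Y ≠ Z) :
    Z ⋖ Y ⊔ Z := by
  have hinf : Y ⊓ Z = X := by
    rcases eq_or_lt_of_le (le_inf hY.1.le hZ.1.le) with h | h
    · -- X = Y ⊓ Z
      exact h.symm
    · -- X < Y ⊓ Z ≤ Y forces Y ⊓ Z = Y, i.e. Y ≤ Z, contradiction
      exfalso
      have h1 : Y ⊓ Z = Y := by
        by_contra hne'
        exact hY.2 h (lt_of_le_of_ne inf_le_left hne')
      have hYZ : Y ≤ Z := by rw [← h1]; exact inf_le_right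
      rcases eq_or_lt_of_le hYZ with h2 | h2
      · exact hne h2
      · exact hZ.2 hY.1 h2
  constructor
  · -- Z < Y ⊔ Z
    rcases eq_or_lt_of_le (le_sup_right : Z ≤ Y ⊔ Z) with h | h
    · exfalso
      have : Y ≤ Z := by rw [h]; exact le_sup_left
      have : Y ⊓ Z = Y := inf_eq_left.mpr this
      rw [hinf] at this
      exact hY.1.ne this
    · exact h
  · intro T hZT hTY
    have hTY' : T ≤ Y ⊔ Z := hTY.le
    have h1 : X ≤ T ⊓ Y := by
      rw [← hinf]; exact le_inf (inf_le_right.trans hZT.le) inf_le_left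
    have h2 : T ⊓ Y = X := by
      rcases eq_or_lt_of_le h1 with h | h
      · exact h.symm
      · exfalso
        have h3 : T ⊓ Y = Y := by
          by_contra hne'
          exact hY.2 h (lt_of_le_of_ne inf_le_right hne')
        have h4 : Y ≤ T := by rw [← h3]; exact inf_le_left
        have : Y ⊔ Z ≤ T := sup_le h4 hZT.le
        exact hTY.not_ge this
    have : T = Z := by
      have := inf_eq_left.mpr hTY'
      calc T = T ⊓ (Y ⊔ Z) := this.symm
        _ = T ⊓ Y ⊔ T ⊓ Z := inf_sup_left T Y Z
        _ = X ⊔ Z := by rw [h2, inf_eq_right.mpr hZT.le]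
        _ = Z := sup_eq_right.mpr hZ.1.le
    exact hZT.ne' this

lemma exists_cov_between {a b : L} (h : a < b) : ∃ c, a ⋖ c ∧ c ≤ b := by
  obtain ⟨c, ⟨hac, hcb⟩, hmin⟩ :=
    Set.Finite.exists_minimalFor id {x | a < x ∧ x ≤ b} (Set.toFinite _) ⟨b, h, le_rfl⟩
  refine ⟨c, ⟨hac, fun t hat htc => ?_⟩, hcb⟩
  exact htc.ne (le_antisymm htc.le (hmin (j := t) ⟨hat, htc.le.trans hcb⟩ htc.le))

lemma exists_cov_below {a : L} (h : ¬ ∀ X, a ≤ X) : ∃ c, c ⋖ a := by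
  push_neg at h
  obtain ⟨y, hy⟩ := h
  have hlt : a ⊓ y < a :=
    lt_of_le_of_ne inf_le_left (fun he => hy (he ▸ inf_le_right))
  obtain ⟨c, hc, hmax⟩ :=
    Set.Finite.exists_maximalFor id {x | x < a} (Set.toFinite _) ⟨a ⊓ y, hlt⟩
  refine ⟨c, hc, fun t hct hta => ?_⟩
  exact hct.ne (le_antisymm hct.le (hmax (j := t) hta hct.le))

lemma exists_cov_above {a : L} (h : ¬ ∀ X, X ≤ a) : ∃ c, a ⋖ c := by
  push_neg at h
  obtain ⟨y, hy⟩ := h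
  have hlt : a < a ⊔ y :=
    lt_of_le_of_ne le_sup_left (fun he => hy (he ▸ le_sup_right))
  obtain ⟨c, hc, _⟩ := exists_cov_between hlt
  exact ⟨c, hc⟩

lemma bot_of_no_below {a : L} (h : ¬ ∃ c : L, c ⋖ a) : ∀ X, a ≤ X := by
  by_contra hb
  exact h (exists_cov_below hb)

/-- Extend a saturated chain downwards to the minimum of the lattice. -/
lemma extend_bot : ∀ (N : ℕ) (a : L), (Set.Iio a).ncard ≤ N → ∀ t : List L,
    (a :: t).Chain' (· ⋖ ·) →
    ∃ (s : List L) (b : L), (s ++ a :: t).Chain' (· ⋖ ·) ∧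
      (s ++ a :: t).head? = some b ∧ ∀ X : L, b ≤ X := by
  intro N
  induction N with
  | zero =>
    intro a hcard t hch
    refine ⟨[], a, hch, rfl, ?_⟩
    intro X
    by_contra hX
    have hlt : a ⊓ X < a :=
      lt_of_le_of_ne inf_le_left (fun he => hX (he ▸ inf_le_right))
    have : (Set.Iio a).Nonempty := ⟨a ⊓ X, hlt⟩
    have hpos : 0 < (Set.Iio a).ncard := this.ncard_pos (Set.toFinite _)
    omega
  | succ N ih =>
    intro a hcard t hch
    by_cases hbot : ∀ X, a ≤ X
    · exact ⟨[], a, hch, rfl, hbot⟩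
    · obtain ⟨c, hc⟩ := exists_cov_below hbot
      have hsub : Set.Iio c ⊂ Set.Iio a := by
        constructor
        · intro x hx; exact hx.trans hc.1
        · intro hcon
          exact absurd (hcon (Set.mem_Iio.mpr hc.1)) (lt_irrefl c)
      have hlt : (Set.Iio c).ncard < (Set.Iio a).ncard :=
        Set.ncard_lt_ncard hsub (Set.toFinite _)
      obtain ⟨s, b, h1, h2, h3⟩ :=
        ih c (by omega) (a :: t) (List.isChain_cons_cons.mpr ⟨hc, hch⟩)
      refine ⟨s ++ [c], b, ?_, ?_, h3⟩
      · rwa [List.append_assoc, List.singleton_append]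
      · rwa [List.append_assoc, List.singleton_append]

/-- Extend a saturated chain upwards to the maximum of the lattice. -/
lemma extend_top : ∀ (N : ℕ) (a : L), (Set.Ioi a).ncard ≤ N → ∀ t : List L,
    (t ++ [a]).Chain' (· ⋖ ·) →
    ∃ (s : List L) (b : L), ((t ++ [a]) ++ s).Chain' (· ⋖ ·) ∧
      ((t ++ [a]) ++ s).getLast? = some b ∧ ∀ X : L, X ≤ b := by
  intro N
  induction N with
  | zero =>
    intro a hcard t hch
    refine ⟨[], a, by simpa using hch, by simp [List.getLast?_concat], ?_⟩
    intro X
    by_contra hX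
    have hlt : a < a ⊔ X :=
      lt_of_le_of_ne le_sup_left (fun he => hX (he ▸ le_sup_right))
    have : (Set.Ioi a).Nonempty := ⟨a ⊔ X, hlt⟩
    have hpos : 0 < (Set.Ioi a).ncard := this.ncard_pos (Set.toFinite _)
    omega
  | succ N ih =>
    intro a hcard t hch
    by_cases htop : ∀ X, X ≤ a
    · exact ⟨[], a, by simpa using hch, by simp [List.getLast?_concat], htop⟩
    · obtain ⟨c, hc⟩ := exists_cov_above htop
      have hsub : Set.Ioi c ⊂ Set.Ioi a := by
        constructor
        · intro x hx; exact hc.1.trans hx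
        · intro hcon
          exact absurd (hcon (Set.mem_Ioi.mpr hc.1)) (lt_irrefl c)
      have hlt : (Set.Ioi c).ncard < (Set.Ioi a).ncard :=
        Set.ncard_lt_ncard hsub (Set.toFinite _)
      have hch' : ((t ++ [a]) ++ [c]).Chain' (· ⋖ ·) := by
        rw [List.Chain', List.isChain_append]
        refine ⟨hch, List.isChain_singleton c, ?_⟩
        intro x hx y hy
        rw [List.getLast?_concat] at hx
        simp only [List.head?] at hy
        obtain rfl : a = x := by simpa using hx
        obtain rfl : c = y := by simpa using hy
        exact hc
      obtain ⟨s, b, h1, h2, h3⟩ := ih c (by omega) (t ++ [a]) hch'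
      refine ⟨c :: s, b, ?_, ?_, h3⟩
      · have he : (t ++ [a]) ++ c :: s = ((t ++ [a]) ++ [c]) ++ s := by simp
        rw [he]; exact h1
      · have he : (t ++ [a]) ++ c :: s = ((t ++ [a]) ++ [c]) ++ s := by simp
        rw [he]; exact h2

/-- Every nonempty saturated chain segment embeds contiguously into a maximal chain. -/
lemma exists_maxChain_through (seg : List L) (hne : seg ≠ []) (hch : seg.Chain' (· ⋖ ·)) :
    ∃ (C : MaxChain L) (k : ℕ), ∀ (m : ℕ) (hm : m < seg.length),
      ∃ hk : k + m < C.n + 1, C.ch ⟨k + m, hk⟩ = seg[m] := by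
  classical
  -- extend to the top
  obtain ⟨s, btop, hch1, hlast1, htop⟩ :=
    extend_top (Set.Ioi (seg.getLast hne)).ncard (seg.getLast hne) le_rfl seg.dropLast
      (by rw [List.dropLast_append_getLast hne]; exact hch)
  rw [List.dropLast_append_getLast hne] at hch1 hlast1
  -- extend to the bottom
  have hcons : seg ++ s = seg.head hne :: (seg.tail ++ s) := by
    conv_lhs => rw [← List.cons_head_tail hne]
    exact List.cons_append
  obtain ⟨s₂, bbot, hch2, hhead2, hbot⟩ :=
    extend_bot (Set.Iio (seg.head hne)).ncard (seg.head hne) le_rfl (seg.tail ++ s)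
      (by rw [← hcons]; exact hch1)
  set full : List L := s₂ ++ seg.head hne :: (seg.tail ++ s) with hfulldef
  have hfull : full = (s₂ ++ seg) ++ s := by
    rw [hfulldef, ← hcons, ← List.append_assoc]
  have hfullne : full ≠ [] := by
    rw [hfulldef]; exact List.append_ne_nil_of_right_ne_nil _ (List.cons_ne_nil _ _)
  have hlen : 0 < full.length := List.length_pos_iff.mpr hfullne
  have hlenfull : full.length - 1 + 1 = full.length := by omega
  have hgetlast : full.getLast? = some btop := by
    rw [hfull, List.append_assoc,
      List.getLast?_append_of_ne_nil _ (fun h => hne (List.append_eq_nil_iff.mp h).1)]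
    exact hlast1
  refine ⟨⟨full.length - 1, fun i => full[(i : ℕ)]'(by have := i.isLt; omega),
    ?_, ?_, ?_⟩, s₂.length, ?_⟩
  · -- bot
    intro X
    have h0 : full[0]'hlen = full.head hfullne := by
      exact (List.head_eq_getElem_zero hfullne).symm
    have : full.head? = some (full.head hfullne) := List.head?_eq_head hfullne
    rw [hhead2] at this
    have hb : full.head hfullne = bbot := by
      injection this.symm
    simp only [Fin.val_zero]
    rw [h0, hb]
    exact hbot X
  · -- top
    intro X
    have hlast : full.getLast? = some (full.getLast hfullne) :=
      List.getLast?_eq_getLast_of_ne_nil hfullne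
    rw [hgetlast] at hlast
    have hb : btop = full.getLast hfullne := by injection hlast
    have hg : full.getLast hfullne = full[full.length - 1]'(by omega) :=
      List.getLast_eq_getElem hfullne
    simp only [Fin.val_last]
    rw [← hg, ← hb]
    exact htop X
  · -- cov
    intro i
    have hch' : full.Chain' (· ⋖ ·) := by rw [hfulldef]; exact hch2
    have := List.isChain_iff_getElem.mp hch' i (by
      have := i.isLt; omega)
    simpa using this
  · -- embedding
    intro m hm
    have hk : s₂.length + m < full.length := by
      rw [hfull]
      simp only [List.length_append]
      omega
    refine ⟨by show s₂.length + m < full.length - 1 + 1; omega, ?_⟩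
    have hk2 : s₂.length + m < (s₂ ++ seg).length := by simp; omega
    have h1 : full[s₂.length + m]'hk
        = ((s₂ ++ seg) ++ s)[s₂.length + m]'(by rw [← hfull]; exact hk) :=
      List.getElem_of_eq hfull hk
    have h2 : ((s₂ ++ seg) ++ s)[s₂.length + m]'(by rw [← hfull]; exact hk)
        = (s₂ ++ seg)[s₂.length + m]'hk2 := List.getElem_append_left hk2
    have h3 : (s₂ ++ seg)[s₂.length + m]'hk2 = seg[s₂.length + m - s₂.length]'(by simp at hk2 ⊢; omega) :=
      List.getElem_append_right (by omega)
    have h4 : seg[s₂.length + m - s₂.length]'(by simp at hk2 ⊢; omega) = seg[m] := by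
      congr 1
      omega
    simpa using h1.trans (h2.trans (h3.trans h4))

lemma chain_mono (C : MaxChain L) : Monotone C.ch :=
  (Fin.strictMono_iff_lt_succ.mpr (fun i => (C.cov i).lt)).monotone

/-- From the failure of `GirdlePrec P P'` we either directly get the witnesses, or an
element of `P \ P'`. -/
lemma witness_or_sep {P P' : Set L} (hP : IsPrimeIdealSet P)
    (h : ¬ GirdlePrec P P') :
    (∃ X Y Z : L, (X, Y) ∈ girdle P ∧ (X, Z) ∈ girdle P') ∨ ∃ W, W ∈ P ∧ W ∉ P' := by
  unfold GirdlePrec at h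
  push_neg at h
  obtain ⟨C, i, j, hmem, hmem', hij⟩ := h
  rcases eq_or_lt_of_le hij with heq | hlt
  · -- same edge in both girdles
    left
    have hji : j = i := Fin.ext heq
    subst hji
    exact ⟨C.ch j.castSucc, C.ch j.succ, C.ch j.succ, hmem, hmem'⟩
  · -- strictly earlier P' crossing: middle element is in P \ P'
    right
    refine ⟨C.ch j.succ, ?_, hmem'.2.2⟩
    have hle : C.ch j.succ ≤ C.ch i.castSucc := by
      apply chain_mono
      simp only [Fin.le_def, Fin.val_succ, Fin.coe_castSucc]
      omega
    exact down_closed hP.1 hle hmem.2.1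

/-- Given separating elements in both directions, find a common `X` with the two covers. -/
lemma common_covers {P P' : Set L} (hP : IsPrimeIdealSet P) (hP' : IsPrimeIdealSet P')
    {W W' : L} (hW : W ∈ P ∧ W ∉ P') (hW' : W' ∈ P' ∧ W' ∉ P) :
    ∃ X Y Z : L, (X, Y) ∈ girdle P ∧ (X, Z) ∈ girdle P' := by
  classical
  have hSne : (W ⊓ W') ∈ P ∧ (W ⊓ W') ∈ P' := by
    constructor
    · exact hP.1.2 W hW.1 W'
    · have := hP'.1.2 W' hW'.1 W
      rwa [inf_comm] at this
  obtain ⟨X, hXS, hXmax⟩ :=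
    Set.Finite.exists_maximalFor id {x | x ∈ P ∧ x ∈ P'} (Set.toFinite _) ⟨W ⊓ W', hSne⟩
  -- helper: from an element of P \ P', produce a cover of X outside P' (but in P)
  have key : ∀ (Q Q' : Set L), IsPrimeIdealSet Q → IsPrimeIdealSet Q' →
      X ∈ Q → X ∈ Q' → (∀ x, x ∈ Q ∧ x ∈ Q' → X ≤ x → X = x) →
      ∀ V, V ∈ Q → V ∉ Q' → ∃ c, X ⋖ c ∧ c ∈ Q ∧ c ∉ Q' := by
    intro Q Q' hQ hQ' hXQ hXQ' hmax V hVQ hVQ'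
    have hVX : V ⊔ X ∈ Q := hQ.1.1 V hVQ X hXQ
    have hVX' : V ⊔ X ∉ Q' := by
      intro hmem
      have : X = V ⊔ X := hmax _ ⟨hVX, hmem⟩ le_sup_right
      exact hVQ' (down_closed hQ'.1 (le_sup_left.trans this.symm.le) hXQ')
    have hlt : X < V ⊔ X :=
      lt_of_le_of_ne le_sup_right (fun he => hVX' (he ▸ hXQ'))
    obtain ⟨c, hc, hcle⟩ := exists_cov_between hlt
    refine ⟨c, hc, down_closed hQ.1 hcle hVX, ?_⟩
    intro hcQ'
    have hcQ : c ∈ Q := down_closed hQ.1 hcle hVX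
    have : X = c := hmax c ⟨hcQ, hcQ'⟩ hc.1.le
    exact hc.1.ne this
  obtain ⟨Z, hZc, _, hZ'⟩ := key P P' hP hP' hXS.1 hXS.2
    (fun x hx h => le_antisymm h (hXmax (j := x) hx h)) W hW.1 hW.2
  obtain ⟨Y, hYc, _, hY'⟩ := key P' P hP' hP hXS.2 hXS.1
    (fun x hx h => le_antisymm h (hXmax (j := x) ⟨hx.2, hx.1⟩ h)) W' hW'.1 hW'.2
  exact ⟨X, Y, Z, ⟨hYc, hXS.1, hY'⟩, ⟨hZc, hXS.2, hZ'⟩⟩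

/-- Lemma 5.6: girdles of distinct prime ideals `P, P'` are incomparable under `≺`
iff there are `X, Y, Z` with `Y/X` a p-factor of `G(P)` and `Z/X` a p-factor of
`G(P')`. -/
theorem statement15 (P P' : Set L)
    (hP : IsPrimeIdealSet P) (hP' : IsPrimeIdealSet P') (hne : P ≠ P') :
    (¬ GirdlePrec P P' ∧ ¬ GirdlePrec P' P) ↔
      ∃ X Y Z : L, (X, Y) ∈ girdle P ∧ (X, Z) ∈ girdle P' := by
  constructor
  · rintro ⟨h1, h2⟩
    rcases witness_or_sep hP h1 with hw | ⟨W, hW⟩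
    · exact hw
    · rcases witness_or_sep hP' h2 with hw | ⟨W', hW'⟩
      · obtain ⟨X, Y, Z, hXY, hXZ⟩ := hw
        exact ⟨X, Z, Y, hXZ, hXY⟩
      · exact common_covers hP hP' hW hW'
  · rintro ⟨X, Y, Z, ⟨hXY, hXP, hYP⟩, ⟨hXZ, hXP', hZP'⟩⟩
    constructor
    · -- refute GirdlePrec P P'
      intro hprec
      by_cases hZP : Z ∈ P
      · -- chain through X ⋖ Z ⋖ Y ⊔ Z : P'-edge then P-edge
        have hYZ : Y ≠ Z := fun h => hYP (h ▸ hZP)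
        have hcov : Z ⋖ Y ⊔ Z := covby_sup_of_covby hXY hXZ hYZ
        have hsupP : Y ⊔ Z ∉ P := fun h => hYP (down_closed hP.1 le_sup_left h)
        obtain ⟨C, k, hemb⟩ := exists_maxChain_through [X, Z, Y ⊔ Z]
          (by simp) (by simp [List.Chain', List.isChain_cons_cons, hXZ, hcov])
        obtain ⟨hk2, he2⟩ := hemb 2 (by simp)
        obtain ⟨hk1, he1⟩ := hemb 1 (by simp)
        obtain ⟨hk0, he0⟩ := hemb 0 (by simp)
        have hi : k + 1 < C.n := by omega
        set i : Fin C.n := ⟨k + 1, hi⟩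
        set j : Fin C.n := ⟨k, by omega⟩
        have hic : C.ch i.castSucc = Z := by
          have : i.castSucc = (⟨k + 1, hk1⟩ : Fin (C.n + 1)) := Fin.ext rfl
          rw [this]; simpa using he1
        have his : C.ch i.succ = Y ⊔ Z := by
          have : i.succ = (⟨k + 2, hk2⟩ : Fin (C.n + 1)) := Fin.ext rfl
          rw [this]; simpa using he2
        have hjc : C.ch j.castSucc = X := by
          have : j.castSucc = (⟨k + 0, hk0⟩ : Fin (C.n + 1)) := Fin.ext (by simp [j])
          rw [this]; simpa using he0
        have hjs : C.ch j.succ = Z := by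
          have : j.succ = (⟨k + 1, hk1⟩ : Fin (C.n + 1)) := Fin.ext (by simp [j])
          rw [this]; simpa using he1
        have := hprec C i j (by rw [hic, his]; exact ⟨hcov, hZP, hsupP⟩)
          (by rw [hjc, hjs]; exact ⟨hXZ, hXP', hZP'⟩)
        simp [i, j] at this
      · -- the edge X ⋖ Z is in both girdles
        obtain ⟨C, k, hemb⟩ := exists_maxChain_through [X, Z]
          (by simp) (by simp [List.Chain', hXZ])
        obtain ⟨hk1, he1⟩ := hemb 1 (by simp)
        obtain ⟨hk0, he0⟩ := hemb 0 (by simp)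
        set i : Fin C.n := ⟨k, by omega⟩
        have hic : C.ch i.castSucc = X := by
          have : i.castSucc = (⟨k + 0, hk0⟩ : Fin (C.n + 1)) := Fin.ext (by simp [i])
          rw [this]; simpa using he0
        have his : C.ch i.succ = Z := by
          have : i.succ = (⟨k + 1, hk1⟩ : Fin (C.n + 1)) := Fin.ext (by simp [i])
          rw [this]; simpa using he1
        have := hprec C i i (by rw [hic, his]; exact ⟨hXZ, hXP, hZP⟩)
          (by rw [hic, his]; exact ⟨hXZ, hXP', hZP'⟩)
        exact lt_irrefl _ this
    · -- refute GirdlePrec P' P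
      intro hprec
      by_cases hYP' : Y ∈ P'
      · -- chain through X ⋖ Y ⋖ Y ⊔ Z : P-edge then P'-edge
        have hYZ : Z ≠ Y := fun h => hZP' (h ▸ hYP')
        have hcov : Y ⋖ Y ⊔ Z := by
          have := covby_sup_of_covby hXZ hXY hYZ
          rwa [sup_comm] at this
        have hsupP' : Y ⊔ Z ∉ P' := fun h => hZP' (down_closed hP'.1 le_sup_right h)
        obtain ⟨C, k, hemb⟩ := exists_maxChain_through [X, Y, Y ⊔ Z]
          (by simp) (by simp [List.Chain', List.isChain_cons_cons, hXY, hcov])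
        obtain ⟨hk2, he2⟩ := hemb 2 (by simp)
        obtain ⟨hk1, he1⟩ := hemb 1 (by simp)
        obtain ⟨hk0, he0⟩ := hemb 0 (by simp)
        have hi : k + 1 < C.n := by omega
        set i : Fin C.n := ⟨k + 1, hi⟩
        set j : Fin C.n := ⟨k, by omega⟩
        have hic : C.ch i.castSucc = Y := by
          have : i.castSucc = (⟨k + 1, hk1⟩ : Fin (C.n + 1)) := Fin.ext rfl
          rw [this]; simpa using he1
        have his : C.ch i.succ = Y ⊔ Z := by
          have : i.succ = (⟨k + 2, hk2⟩ : Fin (C.n + 1)) := Fin.ext rfl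
          rw [this]; simpa using he2
        have hjc : C.ch j.castSucc = X := by
          have : j.castSucc = (⟨k + 0, hk0⟩ : Fin (C.n + 1)) := Fin.ext (by simp [j])
          rw [this]; simpa using he0
        have hjs : C.ch j.succ = Y := by
          have : j.succ = (⟨k + 1, hk1⟩ : Fin (C.n + 1)) := Fin.ext (by simp [j])
          rw [this]; simpa using he1
        have := hprec C i j (by rw [hic, his]; exact ⟨hcov, hYP', hsupP'⟩)
          (by rw [hjc, hjs]; exact ⟨hXY, hXP, hYP⟩)
        simp [i, j] at this
      · -- the edge X ⋖ Y is in both girdles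
        obtain ⟨C, k, hemb⟩ := exists_maxChain_through [X, Y]
          (by simp) (by simp [List.Chain', hXY])
        obtain ⟨hk1, he1⟩ := hemb 1 (by simp)
        obtain ⟨hk0, he0⟩ := hemb 0 (by simp)
        set i : Fin C.n := ⟨k, by omega⟩
        have hic : C.ch i.castSucc = X := by
          have : i.castSucc = (⟨k + 0, hk0⟩ : Fin (C.n + 1)) := Fin.ext (by simp [i])
          rw [this]; simpa using he0
        have his : C.ch i.succ = Y := by
          have : i.succ = (⟨k + 1, hk1⟩ : Fin (C.n + 1)) := Fin.ext (by simp [i])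
          rw [this]; simpa using he1
        have := hprec C i i (by rw [hic, his]; exact ⟨hXY, hXP', hYP'⟩)
          (by rw [hic, his]; exact ⟨hXY, hXP, hYP⟩)
        exact lt_irrefl _ this

end GirdleStmt
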